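/- Let d ≥ 2 and suppose ℂ^d admits a family of d+1 mutually unbiased orthonormal bases with projections Π_{nk}, n = 1,…,d+1, k = 1,…,d. Then for every density matrix ρ on ℂ^d, the probabilities p_{nk} = tr(Π_{nk} ρ) satisfy the equality Σ_{n=1}^{d+1} Σ_{k=1}^{d} p_{nk}² = tr(ρ²) + 1. -/

import Mathlib

open scoped BigOperators ComplexOrder

/-- Rank-one orthogonal projection `|v⟩⟨v|` onto a vector `v ∈ ℂ^d`, as a matrix. -/
noncomputable def proj {d : ℕ} (v : EuclideanSpace ℂ (Fin d)) : Matrix (Fin d) (Fin d) ℂ :=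
  Matrix.of fun i j => v i * star (v j)

/-- A family of orthonormal bases of `ℂ^d` is mutually unbiased if
`|⟨e n k, e m l⟩|² = 1/d` for all `n ≠ m` and all `k, l`. -/
def MutuallyUnbiased {d N : ℕ} (e : Fin N → Fin d → EuclideanSpace ℂ (Fin d)) : Prop :=
  ∀ n m : Fin N, n ≠ m → ∀ k l : Fin d,
    ‖(inner ℂ (e n k) (e m l) : ℂ)‖ ^ 2 = 1 / d

/-!
The Gram matrix `tr (Π_{nk} Π_{ml}) = δ_{nm} δ_{kl} + (1 - δ_{nm}) / d`, together with
`∑ k, Π_{nk} = 1`, shows that `X ↦ ∑_{n,k} tr (Π_{nk} X) Π_{nk} - (tr X) • 1` fixes every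
`Π_{ml}`. With `d + 1` bases the `Π_{nk}` span all of `M_d(ℂ)`: the `d²` matrices `1` and
`Π_{nk} - 1/d` (`k ≠ 0`) are linearly independent, the functionals `tr (·) / d` and
`tr ((Π_{ml} - Π_{m0}) ·)` being dual to them. Hence
`∑_{n,k} tr (Π_{nk} X) Π_{nk} = X + (tr X) • 1` for every `X`, and pairing with `ρ` gives
`∑ p_{nk}² = tr ρ² + (tr ρ)²`.
-/

open Matrix Finset

section proj

variable {d : ℕ}

lemma trace_proj (v : EuclideanSpace ℂ (Fin d)) : (proj v).trace = inner ℂ v v := by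
  simp only [Matrix.trace, Matrix.diag, proj, of_apply, PiLp.inner_apply,
    RCLike.inner_apply, starRingEnd_apply]

lemma trace_proj_mul_proj (v w : EuclideanSpace ℂ (Fin d)) :
    (proj v * proj w).trace = inner ℂ v w * inner ℂ w v := by
  simp only [Matrix.trace, Matrix.diag, mul_apply, proj, of_apply, PiLp.inner_apply,
    RCLike.inner_apply, starRingEnd_apply, sum_mul_sum]
  rw [Finset.sum_comm]
  exact sum_congr rfl fun _ _ => sum_congr rfl fun _ _ => by ring

lemma isHermitian_proj (v : EuclideanSpace ℂ (Fin d)) : (proj v).IsHermitian := by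
  ext i j
  simp [proj, mul_comm]

lemma Orthonormal.sum_proj_eq_one {v : Fin d → EuclideanSpace ℂ (Fin d)}
    (hv : Orthonormal ℂ v) : ∑ k, proj (v k) = 1 := by
  set M : Matrix (Fin d) (Fin d) ℂ := Matrix.of fun k i => star (v k i)
  -- orthonormality of the rows of `M` says `M * Mᴴ = 1`, while the claim is `Mᴴ * M = 1`
  have hM : M * Mᴴ = 1 := by
    ext k l
    simpa [M, mul_apply, PiLp.inner_apply, mul_comm, one_apply]
      using (orthonormal_iff_ite.mp hv) k l
  have hM' : Mᴴ * M = 1 := mul_eq_one_comm.mp hM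
  ext i j
  simpa [M, mul_apply, Matrix.sum_apply, proj] using congrFun₂ hM' i j

lemma Orthonormal.trace_proj {v : Fin d → EuclideanSpace ℂ (Fin d)} (hv : Orthonormal ℂ v)
    (k : Fin d) : (proj (v k)).trace = 1 := by
  rw [_root_.trace_proj, (orthonormal_iff_ite.mp hv) k k, if_pos rfl]

lemma Orthonormal.trace_proj_mul_proj {v : Fin d → EuclideanSpace ℂ (Fin d)}
    (hv : Orthonormal ℂ v) (k l : Fin d) :
    (proj (v k) * proj (v l)).trace = if k = l then 1 else 0 := by
  rw [_root_.trace_proj_mul_proj, (orthonormal_iff_ite.mp hv) k l,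
    (orthonormal_iff_ite.mp hv) l k]
  split_ifs <;> simp_all

end proj

lemma Matrix.IsHermitian.ofReal_re_trace_mul {n : Type*} [Fintype n] {A B : Matrix n n ℂ}
    (hA : A.IsHermitian) (hB : B.IsHermitian) :
    (((A * B).trace.re : ℝ) : ℂ) = (A * B).trace := by
  refine Complex.conj_eq_iff_re.mp ?_
  rw [starRingEnd_apply, ← trace_conjTranspose, conjTranspose_mul, hA.eq, hB.eq, trace_mul_comm]

namespace MutuallyUnbiased

section

variable {d N : ℕ} {e : Fin N → Fin d → EuclideanSpace ℂ (Fin d)}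

lemma trace_proj_mul_proj_of_ne (hmub : MutuallyUnbiased e) {n m : Fin N} (hnm : n ≠ m)
    (k l : Fin d) : (proj (e n k) * proj (e m l)).trace = (d : ℂ)⁻¹ := by
  have h := hmub n m hnm k l
  rw [_root_.trace_proj_mul_proj, ← inner_conj_symm (e m l) (e n k), Complex.mul_conj,
    Complex.normSq_eq_norm_sq, h]
  push_cast
  exact one_div _

lemma trace_proj_mul_proj (horth : ∀ n, Orthonormal ℂ (e n)) (hmub : MutuallyUnbiased e)
    (n m : Fin N) (k l : Fin d) :
    (proj (e n k) * proj (e m l)).trace =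
      if n = m then (if k = l then 1 else 0) else (d : ℂ)⁻¹ := by
  rcases eq_or_ne n m with rfl | hnm
  · rw [if_pos rfl]
    exact (horth n).trace_proj_mul_proj k l
  · rw [if_neg hnm]
    exact hmub.trace_proj_mul_proj_of_ne hnm k l

lemma linearIndependent_one_and_traceless_proj [NeZero d]
    (horth : ∀ n, Orthonormal ℂ (e n)) (hmub : MutuallyUnbiased e) :
    LinearIndependent ℂ fun i : Option (Fin N × {k : Fin d // k ≠ 0}) =>
      i.elim 1 fun nk => proj (e nk.1 nk.2) - (d : ℂ)⁻¹ • 1 := by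
  have hd : (d : ℂ) ≠ 0 := NeZero.ne _
  let f : Option (Fin N × {k : Fin d // k ≠ 0}) →
      Module.Dual ℂ (Matrix (Fin d) (Fin d) ℂ) :=
    fun i => i.elim ((d : ℂ)⁻¹ • traceLinearMap _ ℂ ℂ) fun ml =>
      traceLinearMap _ ℂ ℂ ∘ₗ LinearMap.mulLeft ℂ (proj (e ml.1 ml.2) - proj (e ml.1 0))
  have hf : ∀ i j, f i (j.elim 1 fun nk => proj (e nk.1 nk.2) - (d : ℂ)⁻¹ • 1) =
      if i = j then 1 else 0 := by
    rintro (_ | ⟨m, l, hl⟩) (_ | ⟨n, k, hk⟩)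
    · simp [f, hd]
    · simp [f, (horth n).trace_proj, hd]
    · simp [f, (horth m).trace_proj]
    · simp only [f, Option.elim, LinearMap.comp_apply, LinearMap.mulLeft_apply,
        traceLinearMap_apply, sub_mul, mul_sub, Matrix.mul_smul, mul_one, trace_sub, trace_smul,
        trace_proj_mul_proj horth hmub, (horth m).trace_proj, Option.some.injEq, Prod.ext_iff,
        Subtype.ext_iff]
      rw [if_neg (Ne.symm hk)]
      split_ifs <;> simp_all
  exact .of_pairwise_dual_eq_zero_one _ f (fun i j hij => by simpa [hij] using hf i j)
    fun i => by simpa using hf i i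

end

section

variable {d : ℕ} [NeZero d] {e : Fin (d + 1) → Fin d → EuclideanSpace ℂ (Fin d)}

theorem span_proj_eq_top (horth : ∀ n, Orthonormal ℂ (e n)) (hmub : MutuallyUnbiased e) :
    Submodule.span ℂ (Set.range fun i : Fin (d + 1) × Fin d => proj (e i.1 i.2)) = ⊤ := by
  set S := Submodule.span ℂ (Set.range fun i : Fin (d + 1) × Fin d => proj (e i.1 i.2))
  have hproj : ∀ n k, proj (e n k) ∈ S := fun n k => Submodule.subset_span ⟨(n, k), rfl⟩
  have hone : (1 : Matrix (Fin d) (Fin d) ℂ) ∈ S :=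
    (horth 0).sum_proj_eq_one ▸ S.sum_mem fun k _ => hproj 0 k
  have hcard : Fintype.card (Option (Fin (d + 1) × {k : Fin d // k ≠ 0})) =
      Module.finrank ℂ (Matrix (Fin d) (Fin d) ℂ) := by
    have : 1 ≤ d := NeZero.one_le
    simp only [Fintype.card_option, Fintype.card_prod, Fintype.card_fin,
      Fintype.card_subtype_compl, Fintype.card_unique, Module.finrank_matrix,
      Module.finrank_self, mul_one]
    zify [this]
    ring
  have hspan :=
    (linearIndependent_one_and_traceless_proj horth hmub).span_eq_top_of_card_eq_finrank' hcard
  rw [eq_top_iff, ← hspan, Submodule.span_le]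
  rintro _ ⟨_ | ⟨n, k⟩, rfl⟩
  · exact hone
  · exact S.sub_mem (hproj n k) (S.smul_mem _ hone)

theorem sum_trace_mul_smul_proj (horth : ∀ n, Orthonormal ℂ (e n)) (hmub : MutuallyUnbiased e)
    (X : Matrix (Fin d) (Fin d) ℂ) :
    ∑ n, ∑ k, (proj (e n k) * X).trace • proj (e n k) = X + X.trace • 1 := by
  let frame : Matrix (Fin d) (Fin d) ℂ →ₗ[ℂ] Matrix (Fin d) (Fin d) ℂ :=
    ∑ n, ∑ k, (traceLinearMap _ ℂ ℂ ∘ₗ LinearMap.mulLeft ℂ (proj (e n k))).smulRight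
      (proj (e n k))
  suffices frame = LinearMap.id + (traceLinearMap _ ℂ ℂ).smulRight 1 by
    simpa [frame] using LinearMap.congr_fun this X
  refine LinearMap.ext_on_range (span_proj_eq_top horth hmub) fun ⟨m, l⟩ => ?_
  have hsum : ∀ n, ∑ k, proj (e n k) = 1 := fun n => (horth n).sum_proj_eq_one
  simp [frame, trace_proj_mul_proj horth hmub, (horth m).trace_proj, ← smul_sum, hsum]
  rw [sum_ite, filter_eq', if_pos (mem_univ _), sum_singleton, filter_ne',
    sum_const, card_erase_of_mem (mem_univ _), card_univ, Fintype.card_fin, Nat.add_sub_cancel,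
    ← Nat.cast_smul_eq_nsmul ℂ, smul_smul, mul_inv_cancel₀ (NeZero.ne (d : ℂ)), one_smul]

theorem sum_trace_mul_trace (horth : ∀ n, Orthonormal ℂ (e n)) (hmub : MutuallyUnbiased e)
    (X Y : Matrix (Fin d) (Fin d) ℂ) :
    ∑ n, ∑ k, (proj (e n k) * X).trace * (proj (e n k) * Y).trace =
      (X * Y).trace + X.trace * Y.trace := by
  simpa [sum_mul, add_mul] using
    congrArg (fun M => (M * Y).trace) (sum_trace_mul_smul_proj horth hmub X)

end

end MutuallyUnbiased

theorem stmt_4 (d : ℕ) (hd : 2 ≤ d)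
    (e : Fin (d + 1) → Fin d → EuclideanSpace ℂ (Fin d))
    (horth : ∀ n, Orthonormal ℂ (e n))
    (hmub : MutuallyUnbiased e)
    (ρ : Matrix (Fin d) (Fin d) ℂ) (hpsd : ρ.PosSemidef) (htr : ρ.trace = 1)
    (p : Fin (d + 1) → Fin d → ℝ)
    (hp : ∀ n k, p n k = ((proj (e n k) * ρ).trace).re) :
    ∑ n : Fin (d + 1), ∑ k : Fin d, (p n k) ^ 2 = ((ρ * ρ).trace).re + 1 := by
  have : NeZero d := ⟨by omega⟩
  have hp_trace : ∀ n k, (p n k : ℂ) = (proj (e n k) * ρ).trace := fun n k => by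
    rw [hp]
    exact (isHermitian_proj _).ofReal_re_trace_mul hpsd.1
  have key := MutuallyUnbiased.sum_trace_mul_trace horth hmub ρ ρ
  simp_rw [← hp_trace, htr, mul_one] at key
  simpa [← Complex.ofReal_pow, ← sq] using congrArg Complex.re key
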